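/- Let 1 < p < ∞, 0 < γ < d, and d(1 − 1/p) < γ < d(1 − 1/p) + 1. Define the modified Riesz kernel K_γ(x,y) = k_γ(x−y) − k_γ(y) where k_γ(y) = C_γ^{-1}|y|^{γ−d}. Then for each fixed x ∈ ℝ^d, the function y ↦ K_γ(x,y) belongs to L^p(ℝ^d). -/

import Mathlib

/-!
Write `s = γ - d < 1`; up to the constant `C_γ⁻¹` the kernel is `‖x - y‖ ^ s - ‖y‖ ^ s`.
On a ball containing `0` and `x` each of the two terms is in `L^p` on its own, because
`‖y‖ ^ (s p)` is locally integrable exactly when `s p > -d`. Far away, the mean value theorem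
for `ρ ↦ ρ ^ s` bounds the difference by `|s| 2^(1-s) ‖x‖ ‖y‖ ^ (s - 1)`, whose `p`-th power is
integrable at infinity exactly when `(s - 1) p < -d`. The two conditions on `γ` are these two
inequalities.
-/

open MeasureTheory Metric Set Module
open scoped ENNReal

lemma abs_rpow_sub_rpow_le {s m a b : ℝ} (hs : s ≤ 1) (hm : 0 < m) (ha : m ≤ a) (hb : m ≤ b) :
    |a ^ s - b ^ s| ≤ |s| * m ^ (s - 1) * |a - b| := by
  have hderiv : ∀ u ∈ Ici m, HasDerivWithinAt (· ^ s) (s * u ^ (s - 1)) (Ici m) u :=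
    fun u hu => (Real.hasDerivAt_rpow_const (.inl (hm.trans_le hu).ne')).hasDerivWithinAt
  have hbound : ∀ u ∈ Ici m, ‖s * u ^ (s - 1)‖ ≤ |s| * m ^ (s - 1) := fun u hu => by
    rw [norm_mul, Real.norm_eq_abs, Real.norm_of_nonneg (Real.rpow_nonneg (hm.le.trans hu) _)]
    exact mul_le_mul_of_nonneg_left (Real.rpow_le_rpow_of_nonpos hm hu (by linarith)) (abs_nonneg s)
  simpa only [Real.norm_eq_abs] using
    (convex_Ici m).norm_image_sub_le_of_norm_hasDerivWithin_le hderiv hbound hb ha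

section NormedGroup

variable {F : Type*} [SeminormedAddCommGroup F]

lemma abs_norm_sub_rpow_sub_norm_rpow_le {s : ℝ} (hs : s ≤ 1) {x y : F} (hxy : 2 * ‖x‖ < ‖y‖) :
    |‖x - y‖ ^ s - ‖y‖ ^ s| ≤ |s| * 2 ^ (1 - s) * ‖x‖ * ‖y‖ ^ (s - 1) := by
  have hy : 0 < ‖y‖ := by linarith [norm_nonneg x]
  have hm : ‖y‖ / 2 ≤ ‖x - y‖ := by
    rw [norm_sub_rev]; linarith [norm_sub_norm_le y x]
  have hdist : |‖x - y‖ - ‖y‖| ≤ ‖x‖ := by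
    simpa [norm_neg] using abs_norm_sub_norm_le (x - y) (-y)
  have hpow : (‖y‖ / 2) ^ (s - 1) = 2 ^ (1 - s) * ‖y‖ ^ (s - 1) := by
    rw [Real.div_rpow hy.le zero_le_two, div_eq_mul_inv, ← Real.rpow_neg zero_le_two, neg_sub,
      mul_comm]
  calc |‖x - y‖ ^ s - ‖y‖ ^ s|
      ≤ |s| * (‖y‖ / 2) ^ (s - 1) * |‖x - y‖ - ‖y‖| :=
        abs_rpow_sub_rpow_le hs (by positivity) hm (by linarith)
    _ ≤ |s| * (‖y‖ / 2) ^ (s - 1) * ‖x‖ := by gcongr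
    _ = |s| * 2 ^ (1 - s) * ‖x‖ * ‖y‖ ^ (s - 1) := by rw [hpow]; ring

lemma abs_norm_sub_rpow_sub_norm_rpow_le_indicator {s R r : ℝ} (hs : s ≤ 1) {x : F}
    (hR : 2 * ‖x‖ ≤ R) (hr : R + ‖x‖ < r) (y : F) :
    |‖x - y‖ ^ s - ‖y‖ ^ s| ≤
      (ball 0 r).indicator (‖·‖ ^ s) (y - x) + (ball 0 r).indicator (‖·‖ ^ s) y +
        |s| * 2 ^ (1 - s) * ‖x‖ * (closedBall 0 R)ᶜ.indicator (‖·‖ ^ (s - 1)) y := by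
  by_cases hy : ‖y‖ ≤ R
  · have hyx : y - x ∈ ball 0 r := by
      rw [mem_ball_zero_iff]; linarith [norm_sub_le y x, norm_nonneg x]
    have hy' : y ∈ ball 0 r := by rw [mem_ball_zero_iff]; linarith [norm_nonneg x]
    rw [indicator_of_mem hyx, indicator_of_mem hy',
      indicator_of_notMem (by simpa using hy), mul_zero, add_zero, norm_sub_rev]
    have := Real.rpow_nonneg (norm_nonneg (y - x)) s
    have := Real.rpow_nonneg (norm_nonneg y) s
    exact abs_sub_le_iff.2 ⟨by linarith, by linarith⟩
  · have hy' : y ∈ (closedBall 0 R)ᶜ := by simpa using hy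
    have hxy : 2 * ‖x‖ < ‖y‖ := by linarith
    rw [indicator_of_mem hy']
    have := indicator_nonneg (fun z (_ : z ∈ ball (0 : F) r) => Real.rpow_nonneg (norm_nonneg z) s)
    linarith [abs_norm_sub_rpow_sub_norm_rpow_le hs hxy, this (y - x), this y]

end NormedGroup

lemma memLp_norm_rpow_iff_integrable {F : Type*} [SeminormedAddCommGroup F] [MeasurableSpace F]
    [OpensMeasurableSpace F] {ν : Measure F} {p : ℝ≥0∞} (hp0 : p ≠ 0) (hptop : p ≠ ∞)
    {s : ℝ} : MemLp (fun y : F => ‖y‖ ^ s) p ν ↔ Integrable (fun y => ‖y‖ ^ (s * p.toReal)) ν := by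
  rw [← integrable_norm_rpow_iff
    (by fun_prop : Measurable fun y : F => ‖y‖ ^ s).aestronglyMeasurable hp0 hptop]
  refine integrable_congr (ae_of_all _ fun y => ?_)
  dsimp only
  rw [Real.norm_of_nonneg (Real.rpow_nonneg (norm_nonneg y) s), ← Real.rpow_mul (norm_nonneg y)]

section AddHaar

variable {E : Type*} [NormedAddCommGroup E] [NormedSpace ℝ E] [FiniteDimensional ℝ E]
  [MeasurableSpace E] [BorelSpace E] {μ : Measure E} [μ.IsAddHaarMeasure]

lemma integrableOn_ball_norm_rpow (hd : 1 ≤ finrank ℝ E) {t : ℝ}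
    (ht : -(finrank ℝ E : ℝ) < t) (r : ℝ) :
    IntegrableOn (fun y : E => ‖y‖ ^ t) (ball 0 r) μ := by
  refine integrableOn_ball_of_norm_le_rpow (C := 1) (α := -t) hd (by linarith)
    (ae_of_all _ fun y => ?_) (by fun_prop : Measurable fun y : E => ‖y‖ ^ t).aestronglyMeasurable
  rw [one_mul, neg_neg, Real.norm_of_nonneg (Real.rpow_nonneg (norm_nonneg y) t)]

lemma integrableOn_compl_closedBall_norm_rpow (hd : 1 ≤ finrank ℝ E) {t : ℝ}
    (ht : t < -(finrank ℝ E : ℝ)) {r : ℝ} (hr : 0 < r) : IntegrableOn (fun y : E => ‖y‖ ^ t) (closedBall 0 r)ᶜ μ := by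
  have hindicator : (closedBall (0 : E) r)ᶜ.indicator (‖·‖ ^ t) =
      fun y => (Ioi r).indicator (· ^ t) ‖y‖ := by
    ext y
    simp [indicator, not_le]
  rw [← integrable_indicator_iff measurableSet_closedBall.compl, hindicator]
  have hradial : IntegrableOn (fun ρ : ℝ => ρ ^ (t + (finrank ℝ E - 1 : ℕ))) (Ioi r) :=
    integrableOn_Ioi_rpow_of_lt (by push_cast [Nat.cast_sub hd]; linarith) hr
  have : Nontrivial E := Module.nontrivial_of_finrank_pos (R := ℝ) hd
  rw [integrable_fun_norm_addHaar]
  refine Integrable.mono_measure ?_ Measure.restrict_le_self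
  have hprod : (fun ρ : ℝ => ρ ^ (finrank ℝ E - 1) • (Ioi r).indicator (· ^ t) ρ) =
      (Ioi r).indicator fun ρ => ρ ^ (finrank ℝ E - 1) * ρ ^ t := by
    ext ρ
    rw [smul_eq_mul, indicator_mul_right]
  rw [hprod, integrable_indicator_iff measurableSet_Ioi]
  refine hradial.congr_fun (fun ρ (hρ : r < ρ) => ?_) measurableSet_Ioi
  dsimp only
  rw [Real.rpow_add (hr.trans hρ), Real.rpow_natCast, mul_comm]

lemma memLp_indicator_ball_norm_rpow (hd : 1 ≤ finrank ℝ E) {p : ℝ≥0∞} (hp0 : p ≠ 0)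
    (hptop : p ≠ ∞) {s : ℝ} (hs : -(finrank ℝ E : ℝ) < s * p.toReal) (r : ℝ) :
    MemLp ((ball (0 : E) r).indicator (‖·‖ ^ s)) p μ := by
  rw [memLp_indicator_iff_restrict measurableSet_ball, memLp_norm_rpow_iff_integrable hp0 hptop]
  exact integrableOn_ball_norm_rpow hd hs r

lemma memLp_indicator_compl_closedBall_norm_rpow (hd : 1 ≤ finrank ℝ E) {p : ℝ≥0∞}
    (hp0 : p ≠ 0) (hptop : p ≠ ∞) {s : ℝ} (hs : s * p.toReal < -(finrank ℝ E : ℝ)) {r : ℝ}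
    (hr : 0 < r) : MemLp ((closedBall (0 : E) r)ᶜ.indicator (‖·‖ ^ s)) p μ := by
  rw [memLp_indicator_iff_restrict measurableSet_closedBall.compl,
    memLp_norm_rpow_iff_integrable hp0 hptop]
  exact integrableOn_compl_closedBall_norm_rpow hd hs hr

theorem memLp_norm_sub_rpow_sub_norm_rpow (hd : 1 ≤ finrank ℝ E) {p : ℝ≥0∞} (hp0 : p ≠ 0)
    (hptop : p ≠ ∞) {s : ℝ} (hs₀ : -(finrank ℝ E : ℝ) < s * p.toReal)
    (hs₁ : (s - 1) * p.toReal < -(finrank ℝ E : ℝ)) (x : E) :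
    MemLp (fun y => ‖x - y‖ ^ s - ‖y‖ ^ s) p μ := by
  have hs : s ≤ 1 := by
    have := neg_of_mul_neg_left (hs₁.trans_le (by simp)) ENNReal.toReal_nonneg
    linarith
  have hnear := memLp_indicator_ball_norm_rpow (μ := μ) hd hp0 hptop hs₀ (3 * ‖x‖ + 2)
  have hfar := memLp_indicator_compl_closedBall_norm_rpow (μ := μ) hd hp0 hptop hs₁
    (by positivity : 0 < 2 * ‖x‖ + 1)
  have hdom := ((hnear.comp_measurePreserving (measurePreserving_sub_right μ x)).add hnear).add
    (hfar.const_mul (|s| * 2 ^ (1 - s) * ‖x‖))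
  refine hdom.mono' (by fun_prop : Measurable _).aestronglyMeasurable (ae_of_all _ fun y => ?_)
  rw [Real.norm_eq_abs]
  exact abs_norm_sub_rpow_sub_norm_rpow_le_indicator hs (by linarith) (by linarith) y

end AddHaar

theorem modifiedRieszKernel_memLp_general (d : ℕ) (hd : 1 ≤ d) (p γ : ℝ) (hp : 1 < p)
    (hγ1 : (d : ℝ) * (1 - 1 / p) < γ) (hγ2 : γ < (d : ℝ) * (1 - 1 / p) + 1)
    (x : EuclideanSpace ℝ (Fin d)) :
    MemLp
      (fun y : EuclideanSpace ℝ (Fin d) =>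
        (Real.pi ^ ((d : ℝ) / 2) * 2 ^ γ * Real.Gamma (γ / 2) /
            Real.Gamma (((d : ℝ) - γ) / 2))⁻¹ *
          (‖x - y‖ ^ (γ - d) - ‖y‖ ^ (γ - d)))
      (ENNReal.ofReal p) volume := by
  have hp0 : 0 < p := one_pos.trans hp
  have hdp : (d : ℝ) * (1 - 1 / p) * p = d * p - d := by field_simp
  have hγp₁ := mul_lt_mul_of_pos_right hγ1 hp0
  have hγp₂ := mul_lt_mul_of_pos_right hγ2 hp0
  have hK := memLp_norm_sub_rpow_sub_norm_rpow (μ := volume) (s := γ - d)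
    (by rwa [finrank_euclideanSpace_fin]) (ENNReal.ofReal_ne_zero_iff.2 hp0) ENNReal.ofReal_ne_top
    (by rw [finrank_euclideanSpace_fin, ENNReal.toReal_ofReal hp0.le]; linarith)
    (by rw [finrank_euclideanSpace_fin, ENNReal.toReal_ofReal hp0.le]; linarith) x
  exact hK.const_mul _

/-- For `1 < p < ∞`, `0 < γ < d` with `d(1−1/p) < γ < d(1−1/p)+1`, the modified Riesz kernel
`K_γ(x,y) = k_γ(x−y) − k_γ(y)` satisfies `K_γ(x,·) ∈ L^p(ℝ^d)` for each `x`. -/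
theorem modifiedRieszKernel_memLp (d : ℕ) (hd : 1 ≤ d) (p γ : ℝ) (hp : 1 < p)
    (hγ0 : 0 < γ) (hγd : γ < d)
    (hγ1 : (d : ℝ) * (1 - 1 / p) < γ) (hγ2 : γ < (d : ℝ) * (1 - 1 / p) + 1)
    (x : EuclideanSpace ℝ (Fin d)) :
    MemLp
      (fun y : EuclideanSpace ℝ (Fin d) =>
        (Real.pi ^ ((d : ℝ) / 2) * 2 ^ γ * Real.Gamma (γ / 2) /
            Real.Gamma (((d : ℝ) - γ) / 2))⁻¹ *
          (‖x - y‖ ^ (γ - d) - ‖y‖ ^ (γ - d)))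
      (ENNReal.ofReal p) volume :=
  modifiedRieszKernel_memLp_general d hd p γ hp hγ1 hγ2 x
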